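/- arXiv:1806.04742 — 5 statements merged into one kernel-verified Lean document; each statement's English description precedes it below -/
import Mathlib

section
/- The optimal bottleneck power p* equals the power requirement of some edge of G, where the power requirement of an edge (u,v) is w(u,v)/2 if both endpoints lie in V and w(u,v) if one endpoint lies in {s,t}. Consequently, the optimal value lies in a finite set of at most |E| candidate values. -/
open Finset

variable {α : Type*}

/-- The graph of surviving edges: an edge of `G` survives the power assignment `p`
iff `p u + p v < w (u,v)`; edges with `p u + p v ≥ w` are removed. -/
def cutGraph (G : SimpleGraph α) (w : Sym2 α → ℝ) (p : α → ℝ) : SimpleGraph α where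
  Adj u v := G.Adj u v ∧ p u + p v < w s(u, v)
  symm := by
    constructor
    intro u v h
    refine ⟨h.1.symm, ?_⟩
    rw [Sym2.eq_swap]
    linarith [h.2]
  loopless := ⟨fun u h => G.irrefl h.1⟩

/-- MSPEC feasibility: `p s = p t = 0`, powers nonnegative, and removing the
edges `(u,v)` with `p u + p v ≥ w (u,v)` disconnects `s` from `t`. -/
def Feasible (G : SimpleGraph α) (w : Sym2 α → ℝ) (s t : α) (p : α → ℝ) : Prop :=
  p s = 0 ∧ p t = 0 ∧ (∀ v, 0 ≤ p v) ∧ ¬ (cutGraph G w p).Reachable s t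

/-- The uniform (bottleneck) power assignment: power `q` on every vertex of `V`,
and `0` on `s` and `t`. -/
def uniformP [DecidableEq α] (s t : α) (q : ℝ) : α → ℝ :=
  fun v => if v = s ∨ v = t then 0 else q

/-- Deleting a vertex set `K` from a graph (all edges incident to `K` disappear). -/
def delV (H : SimpleGraph α) (K : Set α) : SimpleGraph α where
  Adj u v := H.Adj u v ∧ u ∉ K ∧ v ∉ K
  symm := ⟨fun u v h => ⟨h.1.symm, h.2.2, h.2.1⟩⟩
  loopless := ⟨fun u h => H.irrefl h.1⟩

/-- `K` is an `s`-`t` vertex cut of `H`. -/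
def IsCut (H : SimpleGraph α) (s t : α) (K : Set α) : Prop :=
  s ∉ K ∧ t ∉ K ∧ ¬ (delV H K).Reachable s t

/-- The power represented by a copy-vertex of the discretized graph:
copy `(v, i)` represents power `i * al` (and copies of `s`, `t` have power `0`). -/
def copyPow [DecidableEq α] (s t : α) (al : ℝ) (a : α × ℕ) : ℝ :=
  if a.1 = s ∨ a.1 = t then 0 else a.2 * al

/-- Validity of a copy-vertex: each `v ∈ V` has copies `v(0), …, v(c-1)`,
while `s` and `t` are represented by their `0`-th copy only. -/
def copyValid [DecidableEq α] (s t : α) (c : ℕ) (a : α × ℕ) : Prop :=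
  if a.1 = s ∨ a.1 = t then a.2 = 0 else a.2 < c

/-- The discretized graph `G'`: vertices are copies `v(i)`; there is an edge
`(u(i), v(j))` iff `(u,v)` is an edge of `G` and `iα + jα < w (u,v)`
(copies of `s`, `t` count with power `0`). -/
def discGraph [DecidableEq α] (G : SimpleGraph α) (w : Sym2 α → ℝ) (s t : α) (al : ℝ)
    (c : ℕ) : SimpleGraph (α × ℕ) where
  Adj a b := copyValid s t c a ∧ copyValid s t c b ∧ G.Adj a.1 b.1 ∧
      copyPow s t al a + copyPow s t al b < w s(a.1, b.1)
  symm := by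
    constructor
    intro a b h
    refine ⟨h.2.1, h.1, h.2.2.1.symm, ?_⟩
    rw [Sym2.eq_swap]
    linarith [h.2.2.2]
  loopless := ⟨fun a h => G.irrefl h.2.2.1⟩

/-- A set of vertices of the discretized graph consisting only of valid copies of
vertices of `V` (i.e. copy-vertices, excluding `s` and `t`). -/
def AllowedCut (s t : α) (c : ℕ) (K : Set (α × ℕ)) : Prop :=
  ∀ a ∈ K, a.1 ≠ s ∧ a.1 ≠ t ∧ a.2 < c

/-- The power requirement of an edge: `w e / 2` if both endpoints are in `V`,
and `w e` if one endpoint is `s` or `t`. -/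
noncomputable def powReq [DecidableEq α] (s t : α) (w : Sym2 α → ℝ) (e : Sym2 α) : ℝ :=
  if s ∈ e ∨ t ∈ e then w e else w e / 2

/-!
Under the uniform assignment `q`, an edge survives exactly when `q` is below its power
requirement, so the surviving graph only changes when `q` crosses one of finitely many
power requirements. If `p*` were not one of them, the largest requirement below `p*` would
give the same surviving graph, hence a smaller feasible value; and if no requirement lies
below `p*`, every edge survives and `s`, `t` stay connected.
-/

section UniformPower

variable [DecidableEq α] {G : SimpleGraph α} {w : Sym2 α → ℝ} {s t : α}

lemma powReq_nonneg (hw : ∀ e, 0 ≤ w e) (e : Sym2 α) : 0 ≤ powReq s t w e := by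
  unfold powReq
  split_ifs <;> linarith [hw e]

/-- An edge has at most one endpoint in `{s, t}`: the powers sum to `q` against `w`, or to
`2 q` against `w / 2`. -/
lemma uniformP_add_lt_iff (hadj : ¬ G.Adj s t) {u v : α} (huv : G.Adj u v) (q : ℝ) :
    uniformP s t q u + uniformP s t q v < w s(u, v) ↔ q < powReq s t w s(u, v) := by
  have hne : u ≠ v := huv.ne
  have hnot_st : ¬ ((u = s ∧ v = t) ∨ (u = t ∧ v = s)) := by
    rintro (⟨rfl, rfl⟩ | ⟨rfl, rfl⟩)
    exacts [hadj huv, hadj huv.symm]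
  unfold uniformP powReq
  simp only [Sym2.mem_iff]
  split_ifs <;> grind

lemma cutGraph_uniformP_adj_iff (hadj : ¬ G.Adj s t) (q : ℝ) (u v : α) :
    (cutGraph G w (uniformP s t q)).Adj u v ↔ G.Adj u v ∧ q < powReq s t w s(u, v) :=
  ⟨fun h => ⟨h.1, (uniformP_add_lt_iff hadj h.1 q).1 h.2⟩,
    fun h => ⟨h.1, (uniformP_add_lt_iff hadj h.1 q).2 h.2⟩⟩

lemma cutGraph_uniformP_eq_of_forall_edge (hadj : ¬ G.Adj s t) {q₁ q₂ : ℝ}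
    (h : ∀ e ∈ G.edgeSet, q₁ < powReq s t w e ↔ q₂ < powReq s t w e) :
    cutGraph G w (uniformP s t q₁) = cutGraph G w (uniformP s t q₂) := by
  ext u v
  simp only [cutGraph_uniformP_adj_iff hadj]
  exact and_congr_right fun huv => h _ huv

lemma cutGraph_uniformP_eq_self (hadj : ¬ G.Adj s t) {q : ℝ}
    (h : ∀ e ∈ G.edgeSet, q < powReq s t w e) : cutGraph G w (uniformP s t q) = G := by
  ext u v
  rw [cutGraph_uniformP_adj_iff hadj]
  exact and_iff_left_of_imp fun huv => h _ huv

lemma feasible_uniformP_iff {q : ℝ} (hq : 0 ≤ q) :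
    Feasible G w s t (uniformP s t q) ↔ ¬ (cutGraph G w (uniformP s t q)).Reachable s t := by
  refine ⟨fun h => h.2.2.2, fun h => ⟨by simp [uniformP], by simp [uniformP], fun v => ?_, h⟩⟩
  unfold uniformP
  split_ifs
  exacts [le_rfl, hq]

end UniformPower

lemma Finset.exists_lt_forall_lt_iff_lt {β : Type*} [LinearOrder β] {P : Finset β} {x : β} (hx : x ∉ P)
    (h : ∃ p ∈ P, p < x) : ∃ y ∈ P, y < x ∧ ∀ p ∈ P, y < p ↔ x < p := by
  obtain ⟨p, hp, hpx⟩ := h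
  have hne : (P.filter (· < x)).Nonempty := ⟨p, Finset.mem_filter.2 ⟨hp, hpx⟩⟩
  obtain ⟨hyP, hyx⟩ := Finset.mem_filter.1 ((P.filter (· < x)).max'_mem hne)
  refine ⟨_, hyP, hyx, fun q hq => ⟨fun hyq => ?_, fun hxq => hyx.trans hxq⟩⟩
  by_contra! hqx
  have hqx : q < x := lt_of_le_of_ne hqx (ne_of_mem_of_not_mem hq hx)
  exact hyq.not_ge (Finset.le_max' _ q (Finset.mem_filter.2 ⟨hq, hqx⟩))

theorem bottleneck_is_power_requirement_general [Fintype α] [DecidableEq α]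
    (G : SimpleGraph α) [DecidableRel G.Adj] (w : Sym2 α → ℝ) (s t : α)
    (hadj : ¬ G.Adj s t) (hw : ∀ e, 0 ≤ w e) (hconn : G.Reachable s t)
    (pstar : ℝ)
    (hps : IsLeast {q : ℝ | 0 ≤ q ∧ Feasible G w s t (uniformP s t q)} pstar) :
    pstar ∈ G.edgeFinset.image (powReq s t w) ∧
      (G.edgeFinset.image (powReq s t w)).card ≤ G.edgeFinset.card := by
  refine ⟨?_, Finset.card_image_le⟩
  obtain ⟨⟨hpstar, hfeas⟩, hleast⟩ := hps
  rw [feasible_uniformP_iff hpstar] at hfeas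
  by_contra hmem
  have hP : ∀ e ∈ G.edgeSet, powReq s t w e ∈ G.edgeFinset.image (powReq s t w) := fun e he =>
    Finset.mem_image_of_mem _ (G.mem_edgeFinset.2 he)
  have hbelow : ∃ p ∈ G.edgeFinset.image (powReq s t w), p < pstar := by
    by_contra! hge
    refine hfeas ?_
    rw [cutGraph_uniformP_eq_self hadj fun e he =>
      lt_of_le_of_ne (hge _ (hP e he)) fun h => hmem (h ▸ hP e he)]
    exact hconn
  obtain ⟨y, hyP, hy, hgap⟩ := Finset.exists_lt_forall_lt_iff_lt hmem hbelow
  obtain ⟨e, -, rfl⟩ := Finset.mem_image.1 hyP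
  have hy0 : 0 ≤ powReq s t w e := powReq_nonneg hw e
  have hyfeas : Feasible G w s t (uniformP s t (powReq s t w e)) := by
    rw [feasible_uniformP_iff hy0,
      cutGraph_uniformP_eq_of_forall_edge hadj fun e' he' => hgap _ (hP e' he')]
    exact hfeas
  exact hy.not_ge (hleast ⟨hy0, hyfeas⟩)

/-- the optimal bottleneck power `p*` equals the power requirement of
some edge of `G`, hence lies in a set of at most `|E|` candidate values. -/
theorem bottleneck_is_power_requirement [Fintype α] [DecidableEq α]
    (G : SimpleGraph α) [DecidableRel G.Adj] (w : Sym2 α → ℝ) (s t : α) (hst : s ≠ t)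
    (hadj : ¬ G.Adj s t) (hw : ∀ e, 0 ≤ w e) (hconn : G.Reachable s t)
    (pstar : ℝ)
    (hps : IsLeast {q : ℝ | 0 ≤ q ∧ Feasible G w s t (uniformP s t q)} pstar) :
    pstar ∈ G.edgeFinset.image (powReq s t w) ∧
      (G.edgeFinset.image (powReq s t w)).card ≤ G.edgeFinset.card :=
  bottleneck_is_power_requirement_general G w s t hadj hw hconn pstar hps
end

section
/- If a graph contains vertices u and v with N(v) ⊆ N(u) (neighbourhood containment), v belongs to some minimum s-t vertex cut K, u ∉ K and u ∉ {s,t}, then (K \ {v}) ∪ {u} is also an s-t vertex cut of the same size; in particular, there exists a minimum s-t vertex cut containing u. -/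
open Finset

variable {α : Type*}

/-- if `N(v) ⊆ N(u)` and `v` lies in a minimum `s`-`t` vertex cut `K`
while `u ∉ K` and `u ∉ {s,t}`, then `(K \ {v}) ∪ {u}` is an `s`-`t` vertex cut of the
same size; in particular there is a minimum `s`-`t` vertex cut containing `u`. -/
theorem swap_in_min_cut [Fintype α]
    (H : SimpleGraph α) (s t : α) (hst : ¬ H.Adj s t)
    (u v : α) (hN : H.neighborSet v ⊆ H.neighborSet u)
    (K : Set α) (hK : IsCut H s t K)
    (hmin : ∀ K', IsCut H s t K' → K.ncard ≤ K'.ncard)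
    (hvK : v ∈ K) (huK : u ∉ K) (hus : u ≠ s) (hut : u ≠ t) :
    IsCut H s t (insert u (K \ {v})) ∧ (insert u (K \ {v})).ncard = K.ncard ∧
      ∃ K', IsCut H s t K' ∧ u ∈ K' ∧ K'.ncard = K.ncard ∧
        ∀ K'', IsCut H s t K'' → K'.ncard ≤ K''.ncard := by
  classical
  obtain ⟨hsK, htK, hreach⟩ := hK
  have hsv : s ≠ v := fun h => hsK (h ▸ hvK)
  have htv : t ≠ v := fun h => htK (h ▸ hvK)
  set K' : Set α := insert u (K \ {v}) with hK'
  have huv : u ≠ v := fun h => huK (h ▸ hvK)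
  -- the map swapping v to u
  set f : α → α := fun x => if x = v then u else x with hf
  have hadj : ∀ {x y}, (delV H K').Adj x y → (delV H K).Adj (f x) (f y) := by
    intro x y hxy'
    obtain ⟨hxy, hx, hy⟩ := hxy'
    have hxu : x ≠ u := fun h => hx (h ▸ Set.mem_insert u _)
    have hyu : y ≠ u := fun h => hy (h ▸ Set.mem_insert u _)
    have hxK : x ∉ K \ {v} := fun h => hx (Set.mem_insert_of_mem _ h)
    have hyK : y ∉ K \ {v} := fun h => hy (Set.mem_insert_of_mem _ h)
    by_cases hxv : x = v
    · have hyv : y ≠ v := fun h => H.irrefl (by rw [hxv, ← h] at hxy; exact hxy)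
      have hyK' : y ∉ K := fun h => hyK ⟨h, hyv⟩
      have : H.Adj u y := hN (show y ∈ H.neighborSet v by subst hxv; exact hxy)
      simp only [hf, if_pos hxv, if_neg hyv]
      exact ⟨this, huK, hyK'⟩
    · by_cases hyv : y = v
      · have hxK' : x ∉ K := fun h => hxK ⟨h, hxv⟩
        have : H.Adj u x := hN (show x ∈ H.neighborSet v by subst hyv; exact hxy.symm)
        simp only [hf, if_pos hyv, if_neg hxv]
        exact ⟨this.symm, hxK', huK⟩
      · simp only [hf, if_neg hxv, if_neg hyv]
        exact ⟨hxy, fun h => hxK ⟨h, hxv⟩, fun h => hyK ⟨h, hyv⟩⟩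
  have hcut : IsCut H s t K' := by
    refine ⟨?_, ?_, ?_⟩
    · intro h
      rcases Set.mem_insert_iff.1 h with h | h
      · exact hus h.symm
      · exact hsK h.1
    · intro h
      rcases Set.mem_insert_iff.1 h with h | h
      · exact hut h.symm
      · exact htK h.1
    · intro hr
      apply hreach
      obtain ⟨w⟩ := hr
      exact ⟨(w.map (⟨f, fun h => hadj h⟩ : delV H K' →g delV H K)).copy
        (show f s = s from if_neg hsv) (show f t = t from if_neg htv)⟩
  have hcard : K'.ncard = K.ncard := by
    have hfin : K.Finite := Set.toFinite K
    have h1 : u ∉ K \ {v} := fun h => huK h.1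
    rw [hK', Set.ncard_insert_of_notMem h1 hfin.diff,
      Set.ncard_diff_singleton_add_one hvK hfin]
  exact ⟨hcut, hcard, K', hcut, Set.mem_insert u _, hcard,
    fun K'' h => hcard ▸ hmin K'' h⟩
end

section
/- In the discretized graph G′, there exists a minimum s-t vertex cut K* such that for every vertex v ∈ V the copies of v contained in K* form a prefix v(0), v(1), …, v(k−1) of the copy sequence for some k ≥ 0. -/
open Finset

variable {α : Type*}

/-! Take an allowed cut `K` of minimum size and replace, for every vertex `v`, its `k` copies
in `K` by `v(0), …, v(k-1)`; the size is unchanged. The result is still a cut: sending each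
surviving copy `v(i)` to the first copy `v(m)` of `v` outside `K` (so `m ≤ k ≤ i`) maps paths of
the new graph to paths of `G' - K`, because lowering copy indices only lowers `iα + jα` and so
keeps edges, and this map fixes `s(0)` and `t(0)`. -/

theorem Set.ncard_eq_sum_ncard_preimage_mk [Fintype α] {β : Type*} {K : Set (α × β)}
    (hK : ∀ a, (Prod.mk a ⁻¹' K).Finite) : K.ncard = ∑ a, (Prod.mk a ⁻¹' K).ncard := by
  have (a : α) : Finite {b // (a, b) ∈ K} := (hK a).to_subtype
  rw [← Nat.card_coe_set_eq,
    Nat.card_congr (Equiv.subtypeProdEquivSigmaSubtype fun a b => (a, b) ∈ K), Nat.card_sigma]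
  rfl

def prefixCut (K : Set (α × ℕ)) : Set (α × ℕ) :=
  {a | a.2 < (Prod.mk a.1 ⁻¹' K).ncard}

theorem mem_prefixCut_of_lt {K : Set (α × ℕ)} {v : α} {i j : ℕ} (hj : (v, j) ∈ prefixCut K)
    (hij : i < j) : (v, i) ∈ prefixCut K :=
  hij.trans hj

theorem preimage_mk_prefixCut (K : Set (α × ℕ)) (v : α) :
    Prod.mk v ⁻¹' prefixCut K = Set.Iio (Prod.mk v ⁻¹' K).ncard :=
  rfl

theorem ncard_prefixCut [Fintype α] {K : Set (α × ℕ)} (hK : ∀ v, (Prod.mk v ⁻¹' K).Finite) :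
    (prefixCut K).ncard = K.ncard := by
  have hpre (v : α) : (Prod.mk v ⁻¹' prefixCut K).Finite := by
    rw [preimage_mk_prefixCut]
    exact Set.finite_Iio _
  simp only [Set.ncard_eq_sum_ncard_preimage_mk hK, Set.ncard_eq_sum_ncard_preimage_mk hpre,
    preimage_mk_prefixCut, Set.ncard_Iio_nat]

noncomputable def firstGap (K : Set (α × ℕ)) (v : α) : ℕ :=
  sInf (Prod.mk v ⁻¹' K)ᶜ

theorem mk_firstGap_notMem {K : Set (α × ℕ)} {v : α} (hK : (Prod.mk v ⁻¹' K).Finite) :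
    (v, firstGap K v) ∉ K :=
  Nat.sInf_mem hK.infinite_compl.nonempty

theorem firstGap_le_ncard {K : Set (α × ℕ)} {v : α} (hK : (Prod.mk v ⁻¹' K).Finite) :
    firstGap K v ≤ (Prod.mk v ⁻¹' K).ncard := by
  have hsub : Set.Iio (firstGap K v) ⊆ Prod.mk v ⁻¹' K := fun _ hj =>
    not_not.1 (Nat.notMem_of_lt_sInf hj)
  simpa using Set.ncard_le_ncard hsub hK

theorem firstGap_eq_zero {K : Set (α × ℕ)} {v : α} (h : (v, 0) ∉ K) : firstGap K v = 0 :=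
  Nat.sInf_eq_zero.2 (Or.inl h)

def CopyAntitone (H : SimpleGraph (α × ℕ)) : Prop :=
  ∀ ⦃u v : α⦄ ⦃i j i' j' : ℕ⦄, H.Adj (u, i) (v, j) → i' ≤ i → j' ≤ j → H.Adj (u, i') (v, j')

theorem CopyAntitone.reachable_firstGap {H : SimpleGraph (α × ℕ)} (hH : CopyAntitone H)
    {K : Set (α × ℕ)} (hK : ∀ v, (Prod.mk v ⁻¹' K).Finite) {a b : α × ℕ}
    (h : (delV H (prefixCut K)).Reachable a b) :
    (delV H K).Reachable (a.1, firstGap K a.1) (b.1, firstGap K b.1) := by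
  have hle {x : α × ℕ} (hx : x ∉ prefixCut K) : firstGap K x.1 ≤ x.2 :=
    (firstGap_le_ncard (hK x.1)).trans (not_lt.1 hx)
  let φ : delV H (prefixCut K) →g delV H K :=
    { toFun := fun x => (x.1, firstGap K x.1)
      map_rel' := fun ⟨hxy, hx, hy⟩ =>
        ⟨hH hxy (hle hx) (hle hy), mk_firstGap_notMem (hK _), mk_firstGap_notMem (hK _)⟩ }
  exact h.map φ

theorem CopyAntitone.isCut_prefixCut {H : SimpleGraph (α × ℕ)} (hH : CopyAntitone H)
    {K : Set (α × ℕ)} (hK : ∀ v, (Prod.mk v ⁻¹' K).Finite) {s t : α} (hs : ∀ i, (s, i) ∉ K)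
    (ht : ∀ i, (t, i) ∉ K) (hcut : ¬ (delV H K).Reachable (s, 0) (t, 0)) :
    IsCut H (s, 0) (t, 0) (prefixCut K) := by
  have hempty {v : α} (hv : ∀ i, (v, i) ∉ K) : (v, 0) ∉ prefixCut K := by
    simp [prefixCut, Set.preimage, hv]
  refine ⟨hempty hs, hempty ht, fun h => hcut ?_⟩
  simpa [firstGap_eq_zero (hs 0), firstGap_eq_zero (ht 0)] using hH.reachable_firstGap hK h

theorem exists_ncard_le_of_exists {β : Type*} {P : Set β → Prop} (h : ∃ K, P K) :
    ∃ K, P K ∧ ∀ K', P K' → K.ncard ≤ K'.ncard := by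
  obtain ⟨K, hK, hmin⟩ := (measure Set.ncard).wf.has_min {K | P K} h
  exact ⟨K, hK, fun K' hK' => not_lt.1 (hmin K' hK')⟩

section DiscGraph

variable {s t : α} {c : ℕ}

theorem AllowedCut.preimage_mk_subset_Iio {K : Set (α × ℕ)} (hK : AllowedCut s t c K) (v : α) :
    Prod.mk v ⁻¹' K ⊆ Set.Iio c :=
  fun k hk => (hK (v, k) hk).2.2

theorem AllowedCut.finite_preimage_mk {K : Set (α × ℕ)} (hK : AllowedCut s t c K) (v : α) :
    (Prod.mk v ⁻¹' K).Finite :=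
  (Set.finite_Iio c).subset (hK.preimage_mk_subset_Iio v)

theorem AllowedCut.prefixCut {K : Set (α × ℕ)} (hK : AllowedCut s t c K) :
    AllowedCut s t c (prefixCut K) := by
  intro ⟨v, i⟩ (hi : i < (Prod.mk v ⁻¹' K).ncard)
  obtain ⟨j, hj⟩ : (Prod.mk v ⁻¹' K).Nonempty := Set.nonempty_of_ncard_ne_zero (by omega)
  have hle : (Prod.mk v ⁻¹' K).ncard ≤ c :=
    (Set.ncard_le_ncard (hK.preimage_mk_subset_Iio v)).trans (Set.ncard_Iio_nat c).le
  exact ⟨(hK _ hj).1, (hK _ hj).2.1, by omega⟩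

variable [DecidableEq α]

theorem copyValid_of_le {v : α} {i j : ℕ} (hj : copyValid s t c (v, j)) (hij : i ≤ j) :
    copyValid s t c (v, i) := by
  unfold copyValid at *
  split_ifs at * <;> omega

theorem copyPow_le_copyPow {al : ℝ} (hal : 0 ≤ al) {v : α} {i j : ℕ} (hij : i ≤ j) :
    copyPow s t al (v, i) ≤ copyPow s t al (v, j) := by
  unfold copyPow
  split_ifs
  · rfl
  · exact mul_le_mul_of_nonneg_right (Nat.cast_le.2 hij) hal

theorem copyAntitone_discGraph (G : SimpleGraph α) (w : Sym2 α → ℝ) {al : ℝ} (hal : 0 ≤ al) :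
    CopyAntitone (discGraph G w s t al c) :=
  fun _ _ _ _ _ _ ⟨hu, hv, hG, hw⟩ hi hj =>
    ⟨copyValid_of_le hu hi, copyValid_of_le hv hj, hG,
      (add_le_add (copyPow_le_copyPow hal hi) (copyPow_le_copyPow hal hj)).trans_lt hw⟩

def allCopies (s t : α) (c : ℕ) : Set (α × ℕ) :=
  {a | a.1 ≠ s ∧ a.1 ≠ t ∧ a.2 < c}

theorem isCut_allCopies (G : SimpleGraph α) (w : Sym2 α → ℝ) (al : ℝ) (hst : s ≠ t)
    (hadj : ¬ G.Adj s t) : IsCut (discGraph G w s t al c) (s, 0) (t, 0) (allCopies s t c) := by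
  refine ⟨by simp [allCopies], by simp [allCopies], ?_⟩
  rintro ⟨_ | @⟨_, b, _, ⟨⟨-, hb, hG, -⟩, -, hbK⟩, -⟩⟩
  · exact hst rfl
  by_cases hbs : b.1 = s
  · exact G.irrefl (hbs ▸ hG)
  by_cases hbt : b.1 = t
  · exact hadj (hbt ▸ hG)
  simp only [copyValid, hbs, hbt, or_self, if_false] at hb
  exact hbK ⟨hbs, hbt, hb⟩

end DiscGraph

/-- the discretized graph `G'` has a minimum `s`-`t` vertex cut (among
cuts consisting of copy-vertices) in which the copies of each vertex form a prefix
`v(0), v(1), …, v(k-1)` of the copy sequence. -/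
theorem prefix_min_cut_exists [Fintype α] [DecidableEq α]
    (G : SimpleGraph α) (w : Sym2 α → ℝ) (s t : α) (hst : s ≠ t)
    (hadj : ¬ G.Adj s t) (al : ℝ) (hal : 0 < al) (c : ℕ) :
    ∃ K : Set (α × ℕ), AllowedCut s t c K ∧
      IsCut (discGraph G w s t al c) (s, 0) (t, 0) K ∧
      (∀ K', AllowedCut s t c K' →
        IsCut (discGraph G w s t al c) (s, 0) (t, 0) K' → K.ncard ≤ K'.ncard) ∧
      (∀ v i j, (v, j) ∈ K → i < j → (v, i) ∈ K) := by
  obtain ⟨K, ⟨hKallowed, hKcut⟩, hKmin⟩ := exists_ncard_le_of_exists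
    (P := fun K => AllowedCut s t c K ∧ IsCut (discGraph G w s t al c) (s, 0) (t, 0) K)
    ⟨allCopies s t c, fun _ h => h, isCut_allCopies G w al hst hadj⟩
  have hfin := hKallowed.finite_preimage_mk
  refine ⟨prefixCut K, hKallowed.prefixCut, ?_, fun K' h₁ h₂ => ?_, fun _ _ _ => mem_prefixCut_of_lt⟩
  · exact (copyAntitone_discGraph G w hal.le).isCut_prefixCut hfin
      (fun _ h => (hKallowed _ h).1 rfl) (fun _ h => (hKallowed _ h).2.1 rfl) hKcut.2.2
  · exact (ncard_prefixCut hfin).trans_le (hKmin K' ⟨h₁, h₂⟩)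
end

section
/- The optimal value Z of discrete MSPEC (where each vertex's power must equal either 0 or the weight of one of its incident edges) satisfies OPT ≤ Z ≤ 2·OPT, where OPT is the optimal value of (unrestricted) MSPEC. -/
open Finset

variable {α : Type*}

/-- Discrete MSPEC feasibility: a feasible MSPEC assignment where each vertex's power
is `0` or the weight of one of its incident edges. -/
def DiscFeasible (G : SimpleGraph α) (w : Sym2 α → ℝ) (s t : α) (p : α → ℝ) : Prop :=
  Feasible G w s t p ∧ ∀ v, p v = 0 ∨ ∃ u, G.Adj v u ∧ p v = w s(v, u)

/-! Round every vertex up to the heaviest edge that it removes as the endpoint of larger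
power. Such an edge has weight at most `p v + p u ≤ 2 p v`, so the total power at most
doubles, and each removed edge stays removed because its endpoint of larger power now
pays for the whole weight on its own. -/

section Rounding

variable [Fintype α] (G : SimpleGraph α) (w : Sym2 α → ℝ) (p : α → ℝ)

def IsHeavierEnd (v u : α) : Prop :=
  G.Adj v u ∧ w s(v, u) ≤ p v + p u ∧ p u ≤ p v

open Classical in
noncomputable def roundCandidates (v : α) : Finset ℝ :=
  insert 0 ((univ.filter (IsHeavierEnd G w p v)).image fun u => w s(v, u))

noncomputable def roundPow (v : α) : ℝ :=
  (roundCandidates G w p v).max' (insert_nonempty _ _)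

variable {G w p}

theorem le_roundPow {v : α} {x : ℝ} (hx : x ∈ roundCandidates G w p v) :
    x ≤ roundPow G w p v :=
  le_max' _ _ hx

theorem roundPow_nonneg (v : α) : 0 ≤ roundPow G w p v :=
  le_roundPow (mem_insert_self _ _)

theorem weight_le_roundPow {v u : α} (h : IsHeavierEnd G w p v u) :
    w s(v, u) ≤ roundPow G w p v := by
  classical
  exact le_roundPow (mem_insert_of_mem (mem_image_of_mem _ (mem_filter.2 ⟨mem_univ u, h⟩)))

theorem roundPow_eq_zero_or (v : α) :
    roundPow G w p v = 0 ∨ ∃ u, IsHeavierEnd G w p v u ∧ roundPow G w p v = w s(v, u) := by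
  classical
  rcases mem_insert.1 (max'_mem (roundCandidates G w p v) (insert_nonempty _ _)) with h | h
  · exact Or.inl h
  · obtain ⟨u, hu, he⟩ := mem_image.1 h
    exact Or.inr ⟨u, (mem_filter.1 hu).2, he.symm⟩

theorem roundPow_le_two_mul (hp : ∀ v, 0 ≤ p v) (v : α) : roundPow G w p v ≤ 2 * p v := by
  rcases roundPow_eq_zero_or (G := G) (w := w) (p := p) v with h | ⟨u, ⟨-, hcut, hle⟩, h⟩
  · linarith [hp v]
  · linarith

theorem cutGraph_roundPow_le : cutGraph G w (roundPow G w p) ≤ cutGraph G w p := by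
  rintro u v ⟨hadj, hlt⟩
  refine ⟨hadj, lt_of_not_ge fun hcut => ?_⟩
  rcases le_total (p u) (p v) with hle | hle
  · have hv := weight_le_roundPow (v := v) (u := u)
      ⟨hadj.symm, by rw [Sym2.eq_swap]; linarith, hle⟩
    rw [Sym2.eq_swap] at hv
    linarith [roundPow_nonneg (G := G) (w := w) (p := p) u]
  · have hu := weight_le_roundPow (v := u) (u := v) ⟨hadj, hcut, hle⟩
    linarith [roundPow_nonneg (G := G) (w := w) (p := p) v]

theorem Feasible.discFeasible_roundPow {s t : α} (hp : Feasible G w s t p) :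
    DiscFeasible G w s t (roundPow G w p) := by
  obtain ⟨hs, ht, hnonneg, hdisc⟩ := hp
  have hzero : ∀ v, p v = 0 → roundPow G w p v = 0 := fun v hv =>
    le_antisymm (by linarith [roundPow_le_two_mul (G := G) (w := w) hnonneg v]) (roundPow_nonneg v)
  exact ⟨⟨hzero s hs, hzero t ht, roundPow_nonneg,
      fun hr => hdisc (hr.mono cutGraph_roundPow_le)⟩,
    fun v => (roundPow_eq_zero_or v).imp id fun ⟨u, hu, he⟩ => ⟨u, hu.1, he⟩⟩

end Rounding

theorem discrete_two_approx_general [Fintype α]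
    (G : SimpleGraph α) (w : Sym2 α → ℝ) (s t : α)
    (OPT Z : ℝ)
    (hOPT : IsLeast {c : ℝ | ∃ p, Feasible G w s t p ∧ ∑ v, p v = c} OPT)
    (hZ : IsLeast {c : ℝ | ∃ p, DiscFeasible G w s t p ∧ ∑ v, p v = c} Z) :
    OPT ≤ Z ∧ Z ≤ 2 * OPT := by
  obtain ⟨⟨p, hp, rfl⟩, hOPT⟩ := hOPT
  obtain ⟨⟨q, hq, rfl⟩, hZ⟩ := hZ
  refine ⟨hOPT ⟨q, hq.1, rfl⟩, ?_⟩
  calc ∑ v, q v ≤ ∑ v, roundPow G w p v := hZ ⟨_, hp.discFeasible_roundPow, rfl⟩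
    _ ≤ ∑ v, 2 * p v := sum_le_sum fun v _ => roundPow_le_two_mul hp.2.2.1 v
    _ = 2 * ∑ v, p v := (mul_sum _ _ _).symm

/-- the optimal value `Z` of discrete MSPEC satisfies
`OPT ≤ Z ≤ 2·OPT`. -/
theorem discrete_two_approx [Fintype α]
    (G : SimpleGraph α) (w : Sym2 α → ℝ) (s t : α) (hw : ∀ e, 0 ≤ w e)
    (OPT Z : ℝ)
    (hOPT : IsLeast {c : ℝ | ∃ p, Feasible G w s t p ∧ ∑ v, p v = c} OPT)
    (hZ : IsLeast {c : ℝ | ∃ p, DiscFeasible G w s t p ∧ ∑ v, p v = c} Z) :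
    OPT ≤ Z ∧ Z ≤ 2 * OPT :=
  discrete_two_approx_general G w s t OPT Z hOPT hZ
end

section
/- In MSPEC with integer edge weights bounded by W, every power value in some optimal solution is an integer between 0 and W; hence the problem reduces exactly to a minimum s-t vertex cut in the discretized graph with W+1 copies of each vertex and step α = 1. -/
open Finset

variable {α : Type*}

/-!
For integral powers `q v ≤ W`, an edge `(u, v)` survives `q` exactly when `u(q u)` and `v(q v)`
are adjacent in the discretized graph. Hence, given a vertex cut `K` of that graph, the lowest
copy of each vertex outside `K` is a feasible integral assignment of cost at most `|K|`; capping it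
at `W` is harmless, since no edge at a vertex of power `W` survives.

Conversely, a feasible real assignment `p` spreads its power over the copies: `v(i)` gets weight
`max 0 (min (p v - i) 1)`. Since the weights are integers, an `s`-`t` walk of total weight below
`1` would survive `p`, so this is a fractional vertex cut. Cutting at a uniformly random threshold
`θ ∈ [0, 1)` of the weighted distance from `s` gives a vertex cut of expected size at most the
total weight, which is at most `∑ p v`.
-/

open Classical MeasureTheory in
theorem exists_mem_card_filter_mem_le_sum_measure {Ω ι : Type*} [MeasurableSpace Ω]
    {μ : Measure Ω} {T : Set Ω} (hT : μ T = 1) (S : Finset ι)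
    {A : ι → Set Ω} (hA : ∀ i, MeasurableSet (A i)) :
    ∃ x ∈ T, (#{i ∈ S | x ∈ A i} : ENNReal) ≤ ∑ i ∈ S, μ (A i) := by
  set f : Ω → ENNReal := fun x => ∑ i ∈ S, (A i).indicator 1 x
  have hf : AEMeasurable f (μ.restrict T) :=
    (measurable_sum S fun i _ => measurable_one.indicator (hA i)).aemeasurable
  obtain ⟨x, ⟨hxT, hx⟩⟩ := nonempty_of_measure_ne_zero
    (measure_le_setLAverage_pos (by simp [hT]) (by simp [hT]) hf).ne'
  refine ⟨x, hxT, ?_⟩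
  calc (#{i ∈ S | x ∈ A i} : ENNReal) = f x := by
        rw [card_filter]
        push_cast
        simp only [f, Set.indicator_apply, Pi.one_apply]
    _ ≤ ∫⁻ a in T, f a ∂μ := by simpa [setLAverage_eq, hT] using hx
    _ = ∑ i ∈ S, μ.restrict T (A i) := by
        simp only [f]
        rw [lintegral_finsetSum _ fun i _ => measurable_one.indicator (hA i)]
        simp_rw [lintegral_indicator_one (hA _)]
    _ ≤ ∑ i ∈ S, μ (A i) := sum_le_sum fun i _ => Measure.restrict_apply_le _ _

open Classical in
theorem exists_mem_Ico_card_le_sum {ι : Type*} (S : Finset ι) (c y : ι → ℝ)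
    (hy : ∀ i ∈ S, 0 ≤ y i) :
    ∃ θ ∈ Set.Ico (0 : ℝ) 1,
      (#{i ∈ S | θ ∈ Set.Ico (c i - y i) (c i)} : ℝ) ≤ ∑ i ∈ S, y i := by
  obtain ⟨θ, hθ, h⟩ := exists_mem_card_filter_mem_le_sum_measure
    (μ := MeasureTheory.volume) (T := Set.Ico 0 1) (by simp [Real.volume_Ico]) S
    (A := fun i => Set.Ico (c i - y i) (c i)) fun _ => measurableSet_Ico
  refine ⟨θ, hθ, ?_⟩
  rw [sum_congr rfl fun i _ => by rw [Real.volume_Ico, sub_sub_cancel]] at h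
  rw [← ENNReal.ofReal_sum_of_nonneg hy] at h
  simpa using (ENNReal.le_ofReal_iff_toReal_le (by simp) (sum_nonneg hy)).1 h

lemma delV_le (H : SimpleGraph α) (K : Set α) : delV H K ≤ H := fun _ _ h => h.1

namespace SimpleGraph

variable {β : Type*} (H : SimpleGraph β) (y : β → ℝ)

/-- Both endpoints of a walk count towards its weight. -/
noncomputable def vertexWeightDist (a x : β) : ℝ :=
  sInf {c | ∃ wk : H.Walk a x, (wk.support.map y).sum = c}

variable {H y}

lemma sum_map_support_nonneg (hy : 0 ≤ y) {a x : β} (wk : H.Walk a x) :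
    0 ≤ (wk.support.map y).sum :=
  List.sum_nonneg fun _ hc => by
    obtain ⟨b, _, rfl⟩ := List.mem_map.1 hc
    exact hy b

lemma vertexWeightDist_le (hy : 0 ≤ y) {a x : β} (wk : H.Walk a x) :
    H.vertexWeightDist y a x ≤ (wk.support.map y).sum :=
  csInf_le ⟨0, by rintro c ⟨wk, rfl⟩; exact sum_map_support_nonneg hy wk⟩ ⟨wk, rfl⟩

lemma le_vertexWeightDist {a x : β} {c : ℝ} (hax : H.Reachable a x)
    (hc : ∀ wk : H.Walk a x, c ≤ (wk.support.map y).sum) : c ≤ H.vertexWeightDist y a x :=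
  le_csInf (let ⟨wk⟩ := hax; ⟨_, wk, rfl⟩) (by rintro _ ⟨wk, rfl⟩; exact hc wk)

lemma vertexWeightDist_le_add_of_adj (hy : 0 ≤ y) {a x z : β} (hax : H.Reachable a x)
    (hxz : H.Adj x z) : H.vertexWeightDist y a z ≤ H.vertexWeightDist y a x + y z := by
  have : H.vertexWeightDist y a z - y z ≤ H.vertexWeightDist y a x :=
    le_vertexWeightDist hax fun wk => by
      have := vertexWeightDist_le hy (wk.concat hxz)
      simp only [Walk.support_concat, List.map_append, List.sum_append, List.map_cons,
        List.map_nil, List.sum_cons, List.sum_nil, add_zero] at this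
      linarith
  linarith

variable (H y) in
open Classical in
noncomputable def thresholdCut (S : Finset β) (a : β) (θ : ℝ) : Finset β :=
  {x ∈ S | θ ∈ Set.Ico (H.vertexWeightDist y a x - y x) (H.vertexWeightDist y a x)}

lemma notMem_thresholdCut {S : Finset β} {a x : β} {θ : ℝ} (hx : y x = 0) :
    x ∉ H.thresholdCut y S a θ := by
  simp [thresholdCut, hx]

/-- The distance from `a` grows by at most the weight of the vertex entered, so a walk can only
cross the threshold `θ` by entering a vertex of the threshold cut. -/
lemma vertexWeightDist_le_of_walk_delV_thresholdCut (hy : 0 ≤ y) {S : Finset β}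
    (hS : ∀ x ∉ S, y x = 0) {a : β} {θ : ℝ} {x z : β}
    (wk : (delV H ↑(H.thresholdCut y S a θ)).Walk x z) (hax : H.Reachable a x)
    (hx : H.vertexWeightDist y a x ≤ θ) : H.vertexWeightDist y a z ≤ θ := by
  induction wk with
  | nil => exact hx
  | @cons x u z hxu _ ih =>
    obtain ⟨hxu, -, huK⟩ := hxu
    refine ih (hax.trans hxu.reachable) (not_lt.1 fun hθu => huK ?_)
    have hle := vertexWeightDist_le_add_of_adj hy hax hxu
    by_cases huS : u ∈ S
    · simp only [thresholdCut, coe_filter, Set.mem_ofPred_eq, Set.mem_Ico]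
      exact ⟨huS, by linarith, hθu⟩
    · linarith [hS u huS]

theorem thresholdCut_isCut (hy : 0 ≤ y) {S : Finset β} (hS : ∀ x ∉ S, y x = 0) {a b : β}
    (ha : y a = 0) (hb : y b = 0) (hab : ∀ wk : H.Walk a b, 1 ≤ (wk.support.map y).sum)
    {θ : ℝ} (hθ : θ ∈ Set.Ico (0 : ℝ) 1) :
    IsCut H a b ↑(H.thresholdCut y S a θ) := by
  refine ⟨notMem_thresholdCut ha, notMem_thresholdCut hb, fun ⟨wk⟩ => ?_⟩
  have hda : H.vertexWeightDist y a a ≤ θ :=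
    (vertexWeightDist_le hy Walk.nil).trans (by simpa [ha] using hθ.1)
  have hdb := vertexWeightDist_le_of_walk_delV_thresholdCut hy hS wk Reachable.rfl hda
  have := le_vertexWeightDist ((wk.mapLe (delV_le _ _)).reachable) hab
  linarith [hθ.2]

theorem exists_isCut_card_le_sum (hy : 0 ≤ y) {S : Finset β} (hS : ∀ x ∉ S, y x = 0)
    {a b : β} (ha : y a = 0) (hb : y b = 0)
    (hab : ∀ wk : H.Walk a b, 1 ≤ (wk.support.map y).sum) :
    ∃ K ⊆ S, IsCut H a b ↑K ∧ (#K : ℝ) ≤ ∑ x ∈ S, y x := by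
  obtain ⟨θ, hθ, hcard⟩ :=
    exists_mem_Ico_card_le_sum S (H.vertexWeightDist y a) y fun x _ => hy x
  exact ⟨H.thresholdCut y S a θ, filter_subset _ _,
    thresholdCut_isCut hy hS ha hb hab hθ, hcard⟩

end SimpleGraph

lemma sum_range_max_min_sub_natCast (x : ℝ) (n : ℕ) :
    ∑ i ∈ range n, max 0 (min (x - i) 1) = max 0 (min x n) := by
  induction n with
  | zero => simp
  | succ n ih =>
    rw [sum_range_succ, ih]
    push_cast
    rcases le_total x n with h | h <;> rcases le_total x 0 with h0 | h0 <;>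
      rcases le_total x (n + 1) with h1 | h1 <;>
      simp only [min_def, max_def] <;> split_ifs <;> linarith

lemma copyPow_add_copyPow_add_one_le [DecidableEq α] {G : SimpleGraph α} {w : Sym2 α → ℕ}
    {s t : α} {c : ℕ} {a b : α × ℕ}
    (hab : (discGraph G (fun e => (w e : ℝ)) s t 1 c).Adj a b) :
    copyPow s t 1 a + copyPow s t 1 b + 1 ≤ w s(a.1, b.1) := by
  have hnat (x : α × ℕ) :
      copyPow s t 1 x = ((if x.1 = s ∨ x.1 = t then 0 else x.2 : ℕ) : ℝ) := by
    unfold copyPow; split_ifs <;> simp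
  have h : copyPow s t 1 a + copyPow s t 1 b < w s(a.1, b.1) := hab.2.2.2
  rw [hnat, hnat] at h ⊢
  exact_mod_cast Nat.add_one_le_of_lt (by exact_mod_cast h)

section Discretization

variable [Fintype α] [DecidableEq α] {G : SimpleGraph α} {w : Sym2 α → ℕ} {s t : α}
  {W : ℕ}

variable (s t W) in
def copySupport : Finset (α × ℕ) :=
  ({v | v ≠ s ∧ v ≠ t} : Finset α) ×ˢ range (W + 1)

lemma allowedCut_of_subset_copySupport {K : Finset (α × ℕ)} (hK : K ⊆ copySupport s t W) :
    AllowedCut s t (W + 1) ↑K := fun a ha => by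
  simpa [copySupport, and_assoc] using hK ha

variable (s t W) in
/-- The copy `v(i)` carries the part of the power `p v` lying in `[i, i + 1)`. -/
def copyWeight (p : α → ℝ) (a : α × ℕ) : ℝ :=
  if a ∈ copySupport s t W then max 0 (min (p a.1 - a.2) 1) else 0

lemma copyWeight_nonneg (p : α → ℝ) (a : α × ℕ) : 0 ≤ copyWeight s t W p a := by
  unfold copyWeight
  split_ifs
  exacts [le_max_left _ _, le_rfl]

lemma sum_copyWeight_le {p : α → ℝ} (hp : ∀ v, 0 ≤ p v) :
    ∑ a ∈ copySupport s t W, copyWeight s t W p a ≤ ∑ v, p v := by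
  rw [copySupport, sum_product]
  refine (sum_le_sum fun v hv => ?_).trans
    (sum_le_sum_of_subset_of_nonneg (filter_subset _ _) fun v _ _ => hp v)
  have hcw : ∀ i ∈ range (W + 1), copyWeight s t W p (v, i) = max 0 (min (p v - i) 1) :=
    fun i hi => if_pos (mem_product.2 ⟨hv, hi⟩)
  rw [sum_congr rfl hcw, sum_range_max_min_sub_natCast]
  exact max_le (hp v) (min_le_left _ _)

lemma le_copyPow_add_copyWeight {p : α → ℝ} (hps : p s = 0) (hpt : p t = 0) {a : α × ℕ}
    (ha : copyValid s t (W + 1) a) (h1 : copyWeight s t W p a < 1) :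
    p a.1 ≤ copyPow s t 1 a + copyWeight s t W p a := by
  by_cases hst : a.1 = s ∨ a.1 = t
  · rcases hst with h | h <;> simp [copyPow, h, hps, hpt, copyWeight_nonneg p a]
  · have hmem : a ∈ copySupport s t W := by
      simp only [copyValid, if_neg hst] at ha
      simp [copySupport, ha, not_or.1 hst]
    simp only [copyWeight, if_pos hmem, copyPow, if_neg hst, mul_one] at h1 ⊢
    have : min (p a.1 - a.2) 1 = p a.1 - a.2 := min_eq_left (by
      by_contra! h
      rw [min_eq_right h.le] at h1
      exact h1.not_ge (le_max_right _ _))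
    linarith [le_max_right 0 (min (p a.1 - a.2) 1)]

lemma reachable_of_sum_copyWeight_lt_one {p : α → ℝ} (hps : p s = 0) (hpt : p t = 0)
    {a b : α × ℕ}
    (wk : (discGraph G (fun e => (w e : ℝ)) s t 1 (W + 1)).Walk a b)
    (hwk : (wk.support.map (copyWeight s t W p)).sum < 1) :
    (cutGraph G (fun e => (w e : ℝ)) p).Reachable a.1 b.1 := by
  induction wk with
  | nil => rfl
  | @cons a z b haz wk ih =>
    have hy := copyWeight_nonneg (s := s) (t := t) (W := W) p
    rw [SimpleGraph.Walk.support_cons, List.map_cons, List.sum_cons] at hwk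
    have hz : copyWeight s t W p z ≤ (wk.support.map (copyWeight s t W p)).sum :=
      List.single_le_sum (fun _ hx => by obtain ⟨c, -, rfl⟩ := List.mem_map.1 hx; exact hy c) _
        (List.mem_map_of_mem wk.start_mem_support)
    have hpa := le_copyPow_add_copyWeight (W := W) hps hpt haz.1 (by linarith [hy z])
    have hpz := le_copyPow_add_copyWeight (W := W) hps hpt haz.2.1 (by linarith [hy a])
    have hslack := copyPow_add_copyPow_add_one_le haz
    have hadj : (cutGraph G (fun e => (w e : ℝ)) p).Adj a.1 z.1 := ⟨haz.2.2.1, by linarith⟩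
    exact hadj.reachable.trans (ih (by linarith [hy a]))

theorem exists_isCut_ncard_le_of_feasible {p : α → ℝ}
    (hp : Feasible G (fun e => (w e : ℝ)) s t p) :
    ∃ K : Set (α × ℕ), AllowedCut s t (W + 1) K ∧
      IsCut (discGraph G (fun e => (w e : ℝ)) s t 1 (W + 1)) (s, 0) (t, 0) K ∧
      (K.ncard : ℝ) ≤ ∑ v, p v := by
  obtain ⟨hps, hpt, hpnn, hnr⟩ := hp
  have hS : ∀ a ∉ copySupport s t W, copyWeight s t W p a = 0 := fun a ha => if_neg ha
  have hzero (a : α × ℕ) (ha : a.1 = s ∨ a.1 = t) : copyWeight s t W p a = 0 :=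
    hS a fun h => by simp [copySupport] at h; tauto
  obtain ⟨K, hKS, hK, hcard⟩ := SimpleGraph.exists_isCut_card_le_sum (copyWeight_nonneg p) hS
    (hzero (s, 0) (.inl rfl)) (hzero (t, 0) (.inr rfl))
    fun wk => not_lt.1 fun h => hnr (reachable_of_sum_copyWeight_lt_one hps hpt wk h)
  exact ⟨K, allowedCut_of_subset_copySupport hKS, hK,
    by simpa using hcard.trans (sum_copyWeight_le hpnn)⟩

end Discretization

lemma sum_le_ncard_of_forall_lt_mem [Fintype α] {K : Set (α × ℕ)} (hK : K.Finite)
    (m : α → ℕ) (hm : ∀ v, ∀ i < m v, (v, i) ∈ K) : ∑ v, m v ≤ K.ncard := by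
  calc ∑ v, m v = #(univ.sigma fun v => range (m v)) := by simp [card_sigma]
    _ ≤ K.ncard := by
      rw [← Set.ncard_coe_finset]
      refine Set.ncard_le_ncard_of_injOn (fun x => (x.1, x.2)) (fun x hx => hm _ _ ?_) ?_ hK
      · simpa using hx
      · rintro ⟨v, i⟩ - ⟨v', i'⟩ - hvi
        obtain ⟨rfl, rfl⟩ := Prod.mk.inj hvi
        rfl

theorem exists_natCast_feasible_sum_le_ncard [Fintype α] [DecidableEq α] {G : SimpleGraph α}
    {w : Sym2 α → ℕ} {s t : α} {W : ℕ} (hw : ∀ e, w e ≤ W) {K : Set (α × ℕ)}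
    (hA : AllowedCut s t (W + 1) K)
    (hC : IsCut (discGraph G (fun e => (w e : ℝ)) s t 1 (W + 1)) (s, 0) (t, 0) K) :
    ∃ q : α → ℝ, Feasible G (fun e => (w e : ℝ)) s t q ∧
      (∀ v, ∃ z : ℕ, z ≤ W ∧ q v = z) ∧ ∑ v, q v ≤ K.ncard := by
  classical
  have hex (v : α) : ∃ i, (v, i) ∉ K := ⟨W + 1, fun h => (hA _ h).2.2.false⟩
  obtain ⟨m, hm_free, hm_below⟩ :
      ∃ m : α → ℕ, (∀ v, (v, m v) ∉ K) ∧ ∀ v, ∀ i < m v, (v, i) ∈ K :=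
    ⟨fun v => Nat.find (hex v), fun v => Nat.find_spec (hex v),
      fun v _ hi => not_not.1 (Nat.find_min (hex v) hi)⟩
  have hm_zero (v : α) (hv : v = s ∨ v = t) : m v = 0 := by
    by_contra h
    have := hA _ (hm_below v 0 (Nat.pos_of_ne_zero h))
    tauto
  obtain ⟨qn, hqn⟩ : ∃ qn : α → ℕ, ∀ v, qn v = min (m v) W := ⟨_, fun _ => rfl⟩
  have hcopy (v : α) : copyPow s t 1 (v, qn v) = qn v ∧ copyValid s t (W + 1) (v, qn v) := by
    by_cases hv : v = s ∨ v = t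
    · simp [copyPow, copyValid, hv, hqn, hm_zero v hv]
    · simp only [copyPow, copyValid, if_neg hv, mul_one, true_and]
      have := hqn v
      omega
  have hfree (v : α) (hv : qn v < W) : (v, qn v) ∉ K := by
    rw [show qn v = m v by have := hqn v; omega]
    exact hm_free v
  let lift : cutGraph G (fun e => (w e : ℝ)) (fun v => qn v) →g
      delV (discGraph G (fun e => (w e : ℝ)) s t 1 (W + 1)) K :=
    { toFun := fun v => (v, qn v)
      map_rel' := fun {x z} ⟨hxz, hlt⟩ => by
        have hlt : (qn x : ℝ) + qn z < w s(x, z) := hlt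
        have hW : qn x + qn z < w s(x, z) := by exact_mod_cast hlt
        have := hw s(x, z)
        refine ⟨⟨(hcopy x).2, (hcopy z).2, hxz, ?_⟩, hfree x (by omega), hfree z (by omega)⟩
        simpa only [(hcopy x).1, (hcopy z).1] using hlt }
  have hqn_s : qn s = 0 := by simp [hqn, hm_zero s (.inl rfl)]
  have hqn_t : qn t = 0 := by simp [hqn, hm_zero t (.inr rfl)]
  have hK : K.Finite := (Set.finite_univ.prod (Set.finite_lt_nat (W + 1))).subset
    fun a ha => ⟨trivial, (hA a ha).2.2⟩
  have hsum : ∑ v, qn v ≤ K.ncard :=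
    (sum_le_sum fun v _ => (hqn v).trans_le (min_le_left _ _)).trans
      (sum_le_ncard_of_forall_lt_mem hK m hm_below)
  refine ⟨fun v => qn v, ⟨by simp [hqn_s], by simp [hqn_t], fun v => Nat.cast_nonneg _,
    fun h => hC.2.2 ?_⟩, fun v => ⟨qn v, (hqn v).trans_le (min_le_right _ _), rfl⟩,
    by beta_reduce; exact_mod_cast hsum⟩
  simpa [lift, hqn_s, hqn_t] using h.map lift

theorem integral_weights_exact_cut_general [Fintype α] [DecidableEq α]
    (G : SimpleGraph α) (w : Sym2 α → ℕ) (W : ℕ) (hw : ∀ e, w e ≤ W)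
    (s t : α)
    (OPT : ℝ)
    (hOPT : IsLeast
      {c : ℝ | ∃ p, Feasible G (fun e => (w e : ℝ)) s t p ∧ ∑ v, p v = c} OPT) :
    (∃ p, Feasible G (fun e => (w e : ℝ)) s t p ∧ ∑ v, p v = OPT ∧
      ∀ v, ∃ z : ℕ, z ≤ W ∧ p v = z) ∧
    ∃ K : Set (α × ℕ), AllowedCut s t (W + 1) K ∧
      IsCut (discGraph G (fun e => (w e : ℝ)) s t 1 (W + 1)) (s, 0) (t, 0) K ∧
      (∀ K', AllowedCut s t (W + 1) K' →
        IsCut (discGraph G (fun e => (w e : ℝ)) s t 1 (W + 1)) (s, 0) (t, 0) K' →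
        K.ncard ≤ K'.ncard) ∧
      OPT = (K.ncard : ℝ) := by
  classical
  obtain ⟨⟨p, hp, rfl⟩, hOPT_le⟩ := hOPT
  obtain ⟨K₀, hK₀⟩ := exists_isCut_ncard_le_of_feasible (W := W) hp
  have hcut : ∃ n, ∃ K, (AllowedCut s t (W + 1) K ∧
      IsCut (discGraph G (fun e => (w e : ℝ)) s t 1 (W + 1)) (s, 0) (t, 0) K) ∧ K.ncard = n :=
    ⟨_, K₀, ⟨hK₀.1, hK₀.2.1⟩, rfl⟩
  obtain ⟨K, ⟨hKA, hKC⟩, hKn⟩ := Nat.find_spec hcut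
  have hK_min : ∀ K', AllowedCut s t (W + 1) K' →
      IsCut (discGraph G (fun e => (w e : ℝ)) s t 1 (W + 1)) (s, 0) (t, 0) K' →
      K.ncard ≤ K'.ncard := fun K' hA hC => hKn ▸ Nat.find_min' hcut ⟨K', ⟨hA, hC⟩, rfl⟩
  obtain ⟨q, hq, hq_nat, hq_sum⟩ := exists_natCast_feasible_sum_le_ncard hw hKA hKC
  have hK_le : (K.ncard : ℝ) ≤ ∑ v, p v :=
    (Nat.cast_le.2 (hK_min K₀ hK₀.1 hK₀.2.1)).trans hK₀.2.2
  have hp_le : ∑ v, p v ≤ ∑ v, q v := hOPT_le ⟨q, hq, rfl⟩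
  exact ⟨⟨q, hq, by linarith, hq_nat⟩, K, hKA, hKC, hK_min, by linarith⟩

/-- for integer edge weights bounded by `W`, MSPEC has an optimal
solution with all powers integers in `[0, W]`, and its optimal value equals the size
of a minimum `s`-`t` vertex cut in the discretized graph with `W+1` copies of each
vertex and step size `α = 1`. -/
theorem integral_weights_exact_cut [Fintype α] [DecidableEq α]
    (G : SimpleGraph α) (w : Sym2 α → ℕ) (W : ℕ) (hw : ∀ e, w e ≤ W)
    (s t : α) (hst : s ≠ t) (hadj : ¬ G.Adj s t)
    (OPT : ℝ)
    (hOPT : IsLeast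
      {c : ℝ | ∃ p, Feasible G (fun e => (w e : ℝ)) s t p ∧ ∑ v, p v = c} OPT) :
    (∃ p, Feasible G (fun e => (w e : ℝ)) s t p ∧ ∑ v, p v = OPT ∧
      ∀ v, ∃ z : ℕ, z ≤ W ∧ p v = z) ∧
    ∃ K : Set (α × ℕ), AllowedCut s t (W + 1) K ∧
      IsCut (discGraph G (fun e => (w e : ℝ)) s t 1 (W + 1)) (s, 0) (t, 0) K ∧
      (∀ K', AllowedCut s t (W + 1) K' →
        IsCut (discGraph G (fun e => (w e : ℝ)) s t 1 (W + 1)) (s, 0) (t, 0) K' →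
        K.ncard ≤ K'.ncard) ∧
      OPT = (K.ncard : ℝ) :=
  integral_weights_exact_cut_general G w W hw s t OPT hOPT
end
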